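/- arXiv:2212.02137 — 5 statements merged into one kernel-verified Lean document; each statement's English description precedes it below -/
import Mathlib

section
/- Let R be a π-adically complete discrete valuation ring and let S* be the set of twisted power series ∑_{i≥0} B_i τ^i with matrix coefficients B_i ∈ Mat_d(R) such that v(B_i) ≥ i for all i and B_0 is invertible, where v(B) is the minimal π-adic valuation exponent such that all entries of B lie in p^{v(B)}, and multiplication is determined by B τ^i ∘ C τ^j = B C^{(q^i)} τ^{i+j} (with C^{(q^i)} denoting entrywise q^i-th power). Then S* is a group under composition. -/
open Finset

/-- Composition ("twisted multiplication") of twisted power series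
`∑ Bᵢ τ^i` with coefficients in `Matrix (Fin d) (Fin d) R`, determined by
`B τ^i ∘ C τ^j = B * C^{(q^i)} * τ^{i+j}` where `C^{(q^i)}` is the entrywise
`q^i`-th power. -/
noncomputable def twistedMul {R : Type*} [CommRing R] (d q : ℕ)
    (g₁ g₂ : ℕ → Matrix (Fin d) (Fin d) R) : ℕ → Matrix (Fin d) (Fin d) R :=
  fun k => ∑ i ∈ range (k + 1), g₁ i * (g₂ (k - i)).map (fun x => x ^ q ^ i)

/-- The identity twisted power series `1 · τ^0`. -/
noncomputable def twistedOne {R : Type*} [CommRing R] (d : ℕ) :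
    ℕ → Matrix (Fin d) (Fin d) R :=
  fun k => if k = 0 then 1 else 0

/-- The set `S* = {∑ Bᵢ τ^i : v(Bᵢ) ≥ i, B₀ ∈ GL_d(R)}`, where `v(B) ≥ i`
means that every entry of `B` lies in `(π)^i`. -/
def Sstar {R : Type*} [CommRing R] (d : ℕ) (π : R) :
    Set (ℕ → Matrix (Fin d) (Fin d) R) :=
  {g | (∀ i, ∀ a b, g i a b ∈ (Ideal.span {π} : Ideal R) ^ i) ∧ IsUnit (g 0)}

/-!
For `q = p ^ h` the twists `σᵢ : x ↦ x ^ q ^ i` are ring endomorphisms (iterated Frobenius) with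
`σᵢ ∘ σⱼ = σᵢ₊ⱼ`, so twisted composition is associative and unital exactly like multiplication
of power series. Since `σᵢ` maps `(π) ^ j` into itself and `(π) ^ i * (π) ^ j ≤ (π) ^ (i + j)`,
the condition `v(Bᵢ) ≥ i` survives composition. Because `B₀` is invertible, the coefficient of
`τ ^ (k + 1)` in `g ∘ g' = 1` can be solved for `g'ₖ₊₁` in terms of lower coefficients, which
gives a right inverse in `S*`; associativity makes every such right inverse two-sided.
-/

namespace Ideal

variable {R : Type*} [CommSemiring R] {n : Type*} [Fintype n] [DecidableEq n]

theorem mul_mem_matrix_mul {I J : Ideal R} {A B : Matrix n n R} (hA : A ∈ I.matrix n)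
    (hB : B ∈ J.matrix n) : A * B ∈ (I * J).matrix n :=
  (mem_matrix _ _ _).2 fun a b => Ideal.sum_mem _ fun c _ => mul_mem_mul (hA a c) (hB c b)

theorem map_pow_mem_matrix {I : Ideal R} {A : Matrix n n R} (hA : A ∈ I.matrix n) {m : ℕ}
    (hm : m ≠ 0) : A.map (· ^ m) ∈ I.matrix n :=
  fun _ _ => I.pow_mem_of_mem (hA _ _) m (Nat.pos_of_ne_zero hm)

theorem mul_map_pow_mem_matrix_pow {I : Ideal R} {A B : Matrix n n R} {i j m : ℕ}
    (hA : A ∈ (I ^ i).matrix n) (hB : B ∈ (I ^ j).matrix n) (hm : m ≠ 0) :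
    A * B.map (· ^ m) ∈ (I ^ (i + j)).matrix n := by
  rw [pow_add]
  exact mul_mem_matrix_mul hA (map_pow_mem_matrix hB hm)

end Ideal

namespace Matrix

theorem map_pow_pow_map_pow_pow {M : Type*} [Monoid M] {m n : Type*} (A : Matrix m n M)
    (q i j : ℕ) : (A.map (· ^ q ^ j)).map (· ^ q ^ i) = A.map (· ^ q ^ (i + j)) := by
  ext
  simp only [map_apply, ← pow_mul, ← pow_add, add_comm i j]

variable {R : Type*} [CommSemiring R] {n : Type*} [Fintype n] [DecidableEq n]
  (p h : ℕ) [ExpChar R p]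

theorem map_pow_pow_eq_mapMatrix (A : Matrix n n R) (i : ℕ) :
    A.map (· ^ (p ^ h) ^ i) = (iterateFrobenius R p (h * i)).mapMatrix A := by
  ext
  simp [iterateFrobenius_def, pow_mul]

theorem map_pow_pow_mul (A B : Matrix n n R) (i : ℕ) :
    (A * B).map (· ^ (p ^ h) ^ i) = A.map (· ^ (p ^ h) ^ i) * B.map (· ^ (p ^ h) ^ i) := by
  simp only [map_pow_pow_eq_mapMatrix, map_mul]

theorem map_pow_pow_sum {ι : Type*} (s : Finset ι) (A : ι → Matrix n n R) (i : ℕ) :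
    (∑ l ∈ s, A l).map (· ^ (p ^ h) ^ i) = ∑ l ∈ s, (A l).map (· ^ (p ^ h) ^ i) := by
  simp only [map_pow_pow_eq_mapMatrix, map_sum]

end Matrix

section TwistedPowerSeries

variable {R : Type*} [CommRing R] {d : ℕ}

theorem twistedMul_apply_eq_sum_antidiagonal (q : ℕ) (g₁ g₂ : ℕ → Matrix (Fin d) (Fin d) R)
    (k : ℕ) :
    twistedMul d q g₁ g₂ k = ∑ x ∈ antidiagonal k, g₁ x.1 * (g₂ x.2).map (· ^ q ^ x.1) :=
  (Nat.sum_antidiagonal_eq_sum_range_succ (fun i j => g₁ i * (g₂ j).map (· ^ q ^ i)) k).symm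

theorem twistedMul_assoc (p h : ℕ) [ExpChar R p] (g₁ g₂ g₃ : ℕ → Matrix (Fin d) (Fin d) R) :
    twistedMul d (p ^ h) (twistedMul d (p ^ h) g₁ g₂) g₃
      = twistedMul d (p ^ h) g₁ (twistedMul d (p ^ h) g₂ g₃) := by
  ext1 k
  simp only [twistedMul_apply_eq_sum_antidiagonal, Matrix.map_pow_pow_sum,
    Matrix.map_pow_pow_mul, Matrix.map_pow_pow_map_pow_pow, sum_mul, mul_sum, sum_sigma']
  refine sum_nbij' (fun ⟨⟨_, l⟩, ⟨i, m⟩⟩ ↦ ⟨(i, m + l), (m, l)⟩)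
    (fun ⟨⟨i, _⟩, ⟨m, l⟩⟩ ↦ ⟨(i + m, l), (i, m)⟩) ?_ ?_ ?_ ?_ ?_ <;>
    aesop (add simp [add_assoc, mul_assoc])

theorem twistedOne_twistedMul (q : ℕ) (g : ℕ → Matrix (Fin d) (Fin d) R) :
    twistedMul d q (twistedOne d) g = g := by
  ext1 k
  rw [twistedMul, sum_eq_single 0 (fun i _ hi => by simp [twistedOne, hi]) (by simp)]
  simp [twistedOne]

theorem twistedMul_twistedOne {q : ℕ} (hq : q ≠ 0) (g : ℕ → Matrix (Fin d) (Fin d) R) :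
    twistedMul d q g (twistedOne d) = g := by
  ext1 k
  have hq' (i : ℕ) : q ^ i ≠ 0 := pow_ne_zero i hq
  rw [twistedMul, sum_eq_single k (fun i hi hik => ?_) (by simp)]
  · rw [twistedOne, if_pos (Nat.sub_self k),
      Matrix.map_one (· ^ q ^ k) (zero_pow (hq' k)) (one_pow _), mul_one]
  · have : k - i ≠ 0 := by grind
    rw [twistedOne, if_neg this, Matrix.map_zero (· ^ q ^ i) (zero_pow (hq' i)), mul_zero]

theorem twistedOne_mem_Sstar (π : R) : twistedOne d ∈ Sstar d π := by
  refine ⟨fun i a b => ?_, by simp [twistedOne]⟩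
  rcases i with _ | i
  · simp
  · simp [twistedOne]

theorem twistedMul_apply_mem_matrix_pow {I : Ideal R} {q : ℕ} (hq : q ≠ 0)
    {g₁ g₂ : ℕ → Matrix (Fin d) (Fin d) R} (hg₁ : ∀ i, g₁ i ∈ (I ^ i).matrix (Fin d))
    (hg₂ : ∀ i, g₂ i ∈ (I ^ i).matrix (Fin d)) (k : ℕ) :
    twistedMul d q g₁ g₂ k ∈ (I ^ k).matrix (Fin d) := by
  refine Ideal.sum_mem _ fun i hi => ?_
  have := Ideal.mul_map_pow_mem_matrix_pow (hg₁ i) (hg₂ (k - i)) (pow_ne_zero i hq)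
  rwa [Nat.add_sub_cancel' (by grind)] at this

theorem twistedMul_mem_Sstar {π : R} {q : ℕ} (hq : q ≠ 0)
    {g₁ g₂ : ℕ → Matrix (Fin d) (Fin d) R} (hg₁ : g₁ ∈ Sstar d π) (hg₂ : g₂ ∈ Sstar d π) :
    twistedMul d q g₁ g₂ ∈ Sstar d π := by
  refine ⟨twistedMul_apply_mem_matrix_pow hq hg₁.1 hg₂.1, ?_⟩
  simpa [twistedMul] using hg₁.2.mul hg₂.2

/-- The coefficient of `τ ^ (k + 1)` in `g ∘ twistedInv d q g` is
`g₀ gₖ₊₁' + ∑_{i ≤ k} gᵢ₊₁ (g'ₖ₋ᵢ)^(q ^ (i + 1))`, and the recursion makes it vanish. -/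
noncomputable def twistedInv (d q : ℕ) (g : ℕ → Matrix (Fin d) (Fin d) R) :
    ℕ → Matrix (Fin d) (Fin d) R
  | 0 => Ring.inverse (g 0)
  | k + 1 => -(Ring.inverse (g 0) *
      ∑ i : Fin (k + 1), g ((i : ℕ) + 1) * (twistedInv d q g (k - i)).map (· ^ q ^ ((i : ℕ) + 1)))

theorem twistedInv_succ (q : ℕ) (g : ℕ → Matrix (Fin d) (Fin d) R) (k : ℕ) :
    twistedInv d q g (k + 1) = -(Ring.inverse (g 0) *
      ∑ i ∈ range (k + 1), g (i + 1) * (twistedInv d q g (k - i)).map (· ^ q ^ (i + 1))) := by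
  rw [twistedInv, ← Fin.sum_univ_eq_sum_range
    (fun i => g (i + 1) * (twistedInv d q g (k - i)).map (· ^ q ^ (i + 1)))]

theorem twistedMul_twistedInv (q : ℕ) {g : ℕ → Matrix (Fin d) (Fin d) R} (hg : IsUnit (g 0)) :
    twistedMul d q g (twistedInv d q g) = twistedOne d := by
  ext1 k
  rcases k with _ | k
  · simp [twistedMul, twistedOne, twistedInv, Ring.mul_inverse_cancel _ hg]
  · rw [twistedMul, sum_range_succ', Nat.sub_zero, twistedInv_succ, twistedOne,
      if_neg k.succ_ne_zero]
    simp [← mul_assoc, Ring.mul_inverse_cancel _ hg]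

theorem twistedInv_apply_mem_matrix_pow {I : Ideal R} {q : ℕ} (hq : q ≠ 0)
    {g : ℕ → Matrix (Fin d) (Fin d) R} (hg : ∀ i, g i ∈ (I ^ i).matrix (Fin d)) (k : ℕ) :
    twistedInv d q g k ∈ (I ^ k).matrix (Fin d) := by
  induction k using Nat.strong_induction_on with
  | _ k ih =>
    rcases k with _ | k
    · simp
    rw [twistedInv_succ]
    refine neg_mem (Ideal.mul_mem_left _ _ (sum_mem fun i hi => ?_))
    have hik : i < k + 1 := mem_range.1 hi
    have := Ideal.mul_map_pow_mem_matrix_pow (hg (i + 1)) (ih (k - i) (by omega))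
      (pow_ne_zero (i + 1) hq)
    rwa [show i + 1 + (k - i) = k + 1 by omega] at this

theorem twistedInv_mem_Sstar {π : R} {q : ℕ} (hq : q ≠ 0) {g : ℕ → Matrix (Fin d) (Fin d) R}
    (hg : g ∈ Sstar d π) : twistedInv d q g ∈ Sstar d π :=
  ⟨twistedInv_apply_mem_matrix_pow hq hg.1, by simpa [twistedInv] using hg.2.ringInverse⟩

theorem twistedInv_twistedMul (p h : ℕ) [ExpChar R p] {g : ℕ → Matrix (Fin d) (Fin d) R}
    (hg : IsUnit (g 0)) : twistedMul d (p ^ h) (twistedInv d (p ^ h) g) g = twistedOne d := by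
  have hq : p ^ h ≠ 0 := (expChar_pow_pos R p h).ne'
  set g' := twistedInv d (p ^ h) g
  set g'' := twistedInv d (p ^ h) g'
  have hg' : IsUnit (g' 0) := by simpa [g', twistedInv] using hg.ringInverse
  have hg'' : g'' = g := calc
    g'' = twistedMul d (p ^ h) (twistedMul d (p ^ h) g g') g'' := by
      rw [twistedMul_twistedInv _ hg, twistedOne_twistedMul]
    _ = twistedMul d (p ^ h) g (twistedMul d (p ^ h) g' g'') := twistedMul_assoc p h g g' g''
    _ = g := by rw [twistedMul_twistedInv _ hg', twistedMul_twistedOne hq]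
  exact hg'' ▸ twistedMul_twistedInv _ hg'

end TwistedPowerSeries

theorem Sstar_group_general
    {R : Type*} [CommRing R]
    (p : ℕ) [Fact p.Prime] [CharP R p]
    (h : ℕ) (q : ℕ) (hq : q = p ^ h)
    (π : R) (d : ℕ) :
    (∀ g₁ g₂ g₃ : ℕ → Matrix (Fin d) (Fin d) R,
        twistedMul d q (twistedMul d q g₁ g₂) g₃
          = twistedMul d q g₁ (twistedMul d q g₂ g₃)) ∧
    (∀ g : ℕ → Matrix (Fin d) (Fin d) R,
        twistedMul d q (twistedOne d) g = g ∧ twistedMul d q g (twistedOne d) = g) ∧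
    (twistedOne d ∈ Sstar d π) ∧
    (∀ g₁ ∈ Sstar d π, ∀ g₂ ∈ Sstar d π, twistedMul d q g₁ g₂ ∈ Sstar d π) ∧
    (∀ g ∈ Sstar d π, ∃ g' ∈ Sstar d π,
        twistedMul d q g g' = twistedOne d ∧ twistedMul d q g' g = twistedOne d) := by
  subst hq
  have hq₀ : p ^ h ≠ 0 := (expChar_pow_pos R p h).ne'
  refine ⟨twistedMul_assoc p h,
    fun g => ⟨twistedOne_twistedMul _ g, twistedMul_twistedOne hq₀ g⟩,
    twistedOne_mem_Sstar π,
    fun g₁ hg₁ g₂ hg₂ => twistedMul_mem_Sstar hq₀ hg₁ hg₂,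
    fun g hg => ⟨twistedInv d _ g, twistedInv_mem_Sstar hq₀ hg,
      twistedMul_twistedInv _ hg.2, twistedInv_twistedMul p h hg.2⟩⟩

/-- Over a `π`-adically complete discrete valuation ring `R`
(of residue characteristic `p`, with `q` a power of `p`), the set `S*` of
twisted power series `∑ Bᵢ τ^i` with `v(Bᵢ) ≥ i` and `B₀` invertible is a
group under composition: the twisted multiplication is associative and unital
on it, `S*` contains the identity, is closed under composition, and every
element of `S*` has a two-sided inverse in `S*`. -/
theorem Sstar_group
    {R : Type*} [CommRing R] [IsDomain R] [IsDiscreteValuationRing R]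
    (p : ℕ) [Fact p.Prime] [CharP R p]
    (h : ℕ) (hh : 0 < h) (q : ℕ) (hq : q = p ^ h)
    (π : R) (hπ : Irreducible π)
    (hcomplete : IsAdicComplete (Ideal.span {π}) R) (d : ℕ) :
    (∀ g₁ g₂ g₃ : ℕ → Matrix (Fin d) (Fin d) R,
        twistedMul d q (twistedMul d q g₁ g₂) g₃
          = twistedMul d q g₁ (twistedMul d q g₂ g₃)) ∧
    (∀ g : ℕ → Matrix (Fin d) (Fin d) R,
        twistedMul d q (twistedOne d) g = g ∧ twistedMul d q g (twistedOne d) = g) ∧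
    (twistedOne d ∈ Sstar d π) ∧
    (∀ g₁ ∈ Sstar d π, ∀ g₂ ∈ Sstar d π, twistedMul d q g₁ g₂ ∈ Sstar d π) ∧
    (∀ g ∈ Sstar d π, ∃ g' ∈ Sstar d π,
        twistedMul d q g g' = twistedOne d ∧ twistedMul d q g' g = twistedOne d) :=
  Sstar_group_general p h q hq π d
end

section
/- Let R be an integral domain of characteristic p and let g = ∑_{i=0}^{∞} B_i τ^i with B_i ∈ Mat_{1×d}(R) satisfy g ∘ φ_E(z) = π·g, where φ_E(z) = ∑_{j=0}^{sf} P_j τ^j with P_0 = π·I and P_{sf} invertible, and where R is a π-adic DVR. Then g = 0. (In other words, an elliptic Anderson module admits no nonzero A-linear characters to the additive group: X(E) = 0.) -/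
open Finset

/-!
Modulo `(π)ⁿ`, the coefficient identity at index `i + sf` expresses `Bᵢ · P_{sf}^{(q^i)}` through
`B_{i+1}, …, B_{i+sf}`. Since `P_{sf}^{(q^i)}` is invertible (Frobenius is a ring endomorphism in
characteristic `p`), vanishing of `B` modulo `(π)ⁿ` propagates downwards from the indices where it
holds by `π`-adic convergence, so every entry of every `Bᵢ` lies in `⋂ₙ (π)ⁿ = 0`.
-/

theorem Matrix.isUnit_map_pow_pow {R n : Type*} [CommRing R] [Fintype n] [DecidableEq n]
    (p : ℕ) [ExpChar R p] {M : Matrix n n R} (hM : IsUnit M) (k : ℕ) :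
    IsUnit (M.map fun x => x ^ p ^ k) :=
  hM.map (iterateFrobenius R p k).mapMatrix

theorem Matrix.map_quotient_mk_eq_zero_iff {R m n : Type*} [CommRing R] {I : Ideal R}
    {M : Matrix m n R} : M.map (Ideal.Quotient.mk I) = 0 ↔ ∀ a b, M a b ∈ I := by
  simp only [← Matrix.ext_iff, Matrix.map_apply, Matrix.zero_apply, Ideal.Quotient.eq_zero_iff_mem]

theorem Matrix.eq_zero_of_forall_map_quotient_mk_pow_eq_zero {R m n : Type*} [CommRing R]
    (I : Ideal R) [IsHausdorff I R] {M : Matrix m n R}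
    (hM : ∀ k, M.map (Ideal.Quotient.mk (I ^ k)) = 0) : M = 0 := by
  have hentries := IsHausdorff.funext' I (f := fun ab : m × n => M ab.1 ab.2) (g := 0)
    fun k ab => congr_fun₂ (hM k) ab.1 ab.2
  exact Matrix.ext fun a b => congrFun hentries (a, b)

section Recurrence

variable {R S m n : Type*} [CommRing R] [CommRing S] [Fintype n]
  {c : R} {s : ℕ} {B : ℕ → Matrix m n R} {C : ℕ → ℕ → Matrix n n R}

theorem mul_eq_sub_sum_of_recurrence
    (hrec : ∀ i, c • B i = ∑ j ∈ range (s + 1), if j ≤ i then B (i - j) * C i j else 0)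
    (i : ℕ) :
    B i * C (i + s) s = c • B (i + s) - ∑ j ∈ range s, B (i + s - j) * C (i + s) j := by
  rw [hrec, sum_range_succ, if_pos (Nat.le_add_left s i), Nat.add_sub_cancel,
    sum_congr rfl fun j hj => if_pos (by have := mem_range.mp hj; omega)]
  abel

theorem map_eq_zero_of_recurrence [DecidableEq n] (f : R →+* S) (hs : 1 ≤ s)
    (hrec : ∀ i, c • B i = ∑ j ∈ range (s + 1), if j ≤ i then B (i - j) * C i j else 0)
    (hunit : ∀ i, IsUnit (C (i + s) s)) (hev : ∃ N, ∀ k > N, (B k).map f = 0) :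
    ∀ i, (B i).map f = 0 := by
  refine Nat.strong_decreasing_induction hev fun i hgt => ?_
  have hlead : (B i * C (i + s) s).map f = 0 := by
    have hsum : ∀ j ∈ range s, (B (i + s - j) * C (i + s) j).map f = 0 := fun j hj => by
      rw [Matrix.map_mul, hgt _ (by have := mem_range.mp hj; omega), Matrix.zero_mul]
    let F := (f : R →+ S).mapMatrix (m := m) (n := n)
    change F _ = 0
    rw [mul_eq_sub_sum_of_recurrence hrec, map_sub, map_sum,
      sum_eq_zero (f := fun j => F _) hsum, sub_zero]
    exact (Matrix.map_smulₛₗ f f c (map_mul f c) _).trans (by rw [hgt _ (by omega), smul_zero])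
  have hdet := (Matrix.isUnit_iff_isUnit_det _).mp (hunit i)
  calc (B i).map f = (B i * C (i + s) s * (C (i + s) s)⁻¹).map f := by
        rw [Matrix.mul_nonsing_inv_cancel_right _ _ hdet]
    _ = 0 := by rw [Matrix.map_mul, hlead, Matrix.zero_mul]

end Recurrence

theorem character_eq_zero_general
    {R : Type*} [CommRing R]
    (p : ℕ) [Fact p.Prime] [CharP R p]
    (h : ℕ) (q : ℕ) (hq : q = p ^ h)
    (π : R)
    (hcomplete : IsAdicComplete (Ideal.span {π}) R)
    (d sf : ℕ) (hsf : 1 ≤ sf)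
    (P : ℕ → Matrix (Fin d) (Fin d) R)
    (hPsf : IsUnit (P sf))
    (B : ℕ → Matrix (Fin 1) (Fin d) R)
    -- the coefficients `Bᵢ` tend to `0` `π`-adically
    (hconv : ∀ n : ℕ, ∃ N : ℕ, ∀ i ≥ N, ∀ a b,
        B i a b ∈ (Ideal.span {π} : Ideal R) ^ n)
    -- `g ∘ φ_E(z) = π · g`, comparing coefficients of `τ^i`
    (hcomm : ∀ i : ℕ, π • B i =
        ∑ j ∈ range (sf + 1),
          if j ≤ i then B (i - j) * (P j).map (fun x => x ^ q ^ (i - j)) else 0) :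
    ∀ i, B i = 0 := by
  have hunit : ∀ i, IsUnit ((P sf).map fun x => x ^ q ^ (i + sf - sf)) := fun i => by
    simpa [hq, ← pow_mul] using Matrix.isUnit_map_pow_pow p hPsf (h * i)
  intro i
  refine Matrix.eq_zero_of_forall_map_quotient_mk_pow_eq_zero (Ideal.span {π}) fun n => ?_
  refine map_eq_zero_of_recurrence _ hsf hcomm hunit ?_ i
  obtain ⟨N, hN⟩ := hconv n
  exact ⟨N, fun k hk => Matrix.map_quotient_mk_eq_zero_iff.mpr (hN k hk.le)⟩

/-- Let `R` be a `π`-adically complete discrete valuation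
ring of characteristic `p` and let `g = ∑ Bᵢ τ^i` be a twisted power series
with row-vector coefficients `Bᵢ ∈ Mat_{1×d}(R)` tending to `0` `π`-adically,
satisfying `g ∘ φ_E(z) = π·g` where `φ_E(z) = ∑_{j=0}^{sf} P_j τ^j` with
`P₀ = π·I` and `P_{sf}` invertible.  Then `g = 0`: an elliptic Anderson
module admits no nonzero `A`-linear character to the additive group,
i.e. `X(E) = 0`. -/
theorem character_eq_zero
    {R : Type*} [CommRing R] [IsDomain R] [IsDiscreteValuationRing R]
    (p : ℕ) [Fact p.Prime] [CharP R p]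
    (h : ℕ) (hh : 0 < h) (q : ℕ) (hq : q = p ^ h)
    (π : R) (hπ : Irreducible π)
    (hcomplete : IsAdicComplete (Ideal.span {π}) R)
    (d sf : ℕ) (hsf : 1 ≤ sf) (hd : 1 ≤ d)
    (P : ℕ → Matrix (Fin d) (Fin d) R)
    (hP0 : P 0 = π • (1 : Matrix (Fin d) (Fin d) R))
    (hPsf : IsUnit (P sf))
    (B : ℕ → Matrix (Fin 1) (Fin d) R)
    -- the coefficients `Bᵢ` tend to `0` `π`-adically
    (hconv : ∀ n : ℕ, ∃ N : ℕ, ∀ i ≥ N, ∀ a b,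
        B i a b ∈ (Ideal.span {π} : Ideal R) ^ n)
    -- `g ∘ φ_E(z) = π · g`, comparing coefficients of `τ^i`
    (hcomm : ∀ i : ℕ, π • B i =
        ∑ j ∈ range (sf + 1),
          if j ≤ i then B (i - j) * (P j).map (fun x => x ^ q ^ (i - j)) else 0) :
    ∀ i, B i = 0 :=
  character_eq_zero_general p h q hq π hcomplete d sf hsf P hPsf B hconv hcomm
end

section
/- Let R be a π-torsion free, π-adically complete ring with q ≥ 3. Suppose φ_{N^1}(z) = ∑_{i=0}^{sf} π^{q^i - 1} P_i^φ τ^i with P_0 = πI. Then there is a unique twisted power series ν_1 = ∑_{i≥0} B_i τ^i with B_0 = I satisfying ν_1 ∘ φ_{N^1}(z) = πI ∘ ν_1, its coefficients satisfy v(B_i) ≥ i for all i, and hence ν_1 lies in the group S* and is an isomorphism N^1 ≅ Ĝ_a^d of A-module schemes. -/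
/-!
Comparing `τ^k`-coefficients and using `P₀ = π`, the equation `ν₁ ∘ φ_{N¹}(z) = π ∘ ν₁` becomes
the triangular system `(π - π^{q^k}) B_k = ∑_{i<k} B_i C_{k-i}^{(q^i)}`. For `k ≥ 1` the factor
`π - π^{q^k}` is `π` times a unit of the local ring, and every `C_j` with `j ≥ 1` is divisible
by `π`, so each `B_k` exists and, `R` being a domain, is unique. The `i`-th summand is divisible
by `π^{i + (q^{k-i} - 1) q^i}`, and `q ≥ 3` makes this exponent exceed `k`; cancelling
`π · unit` then gives `π^k ∣ B_k`.
-/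

open Finset

lemma add_two_le_pow {q j : ℕ} (hq : 3 ≤ q) (hj : j ≠ 0) : j + 2 ≤ q ^ j := by
  obtain ⟨i, rfl⟩ := Nat.exists_eq_succ_of_ne_zero hj
  have : i < q ^ i := Nat.lt_pow_self (by omega)
  rw [pow_succ]
  nlinarith

lemma associated_sub_pow {R : Type*} [CommRing R] [IsLocalRing R] {π : R} (hπ : ¬IsUnit π)
    {n : ℕ} (hn : 2 ≤ n) : Associated π (π - π ^ n) := by
  have hunit : IsUnit (1 - π ^ (n - 1)) :=
    IsLocalRing.isUnit_one_sub_self_of_mem_nonunits _ fun h =>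
      hπ (isUnit_of_dvd_unit (dvd_pow_self π (by omega)) h)
  convert associated_mul_unit_right π _ hunit using 1
  rw [mul_sub, mul_one, ← pow_succ', Nat.sub_add_cancel (by omega)]

namespace Matrix

variable {n : Type*} {R : Type*}

lemma smul_one_map_pow [DecidableEq n] [CommSemiring R] (π : R) {m : ℕ} (hm : m ≠ 0) :
    (π • (1 : Matrix n n R)).map (· ^ m) = π ^ m • 1 := by
  rw [smul_one_eq_diagonal, smul_one_eq_diagonal, diagonal_map (f := (· ^ m)) (zero_pow hm)]

lemma dvd_mul_apply [Fintype n] [CommSemiring R] {x y : R} {A B : Matrix n n R}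
    (hA : ∀ a b, x ∣ A a b) (hB : ∀ a b, y ∣ B a b) (a b : n) : x * y ∣ (A * B) a b :=
  dvd_sum fun c _ => mul_dvd_mul (hA a c) (hB c b)

lemma exists_eq_smul_of_dvd [CommSemiring R] {c : R} {M : Matrix n n R}
    (h : ∀ a b, c ∣ M a b) : ∃ X : Matrix n n R, M = c • X := by
  choose X hX using h
  exact ⟨of X, ext fun a b => hX a b⟩

end Matrix

section Recursion

variable {R : Type*} [CommRing R] {n : Type*} [Fintype n]

/-- The part of the `τ^k`-coefficient of `ν₁ ∘ φ_{N¹}(z)` that involves only `B₀, …, B_{k-1}`;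
here `C j` is the `j`-th coefficient of `φ_{N¹}(z)`. -/
def lowerSum (q : ℕ) (C B : ℕ → Matrix n n R) (k : ℕ) : Matrix n n R :=
  ∑ i ∈ range k, B i * (C (k - i)).map (· ^ q ^ i)

lemma lowerSum_congr (q : ℕ) (C : ℕ → Matrix n n R) {B B' : ℕ → Matrix n n R} {k : ℕ}
    (h : ∀ i < k, B i = B' i) : lowerSum q C B k = lowerSum q C B' k :=
  sum_congr rfl fun i hi => by rw [h i (mem_range.mp hi)]

lemma pow_dvd_lowerSum_apply {q : ℕ} {π : R} {C B : ℕ → Matrix n n R} {k m : ℕ} (f : ℕ → ℕ)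
    (hC : ∀ j, 1 ≤ j → ∀ a b, π ^ (q ^ j - 1) ∣ C j a b)
    (hB : ∀ i < k, ∀ a b, π ^ f i ∣ B i a b)
    (hm : ∀ i < k, m ≤ f i + (q ^ (k - i) - 1) * q ^ i) (a b : n) :
    π ^ m ∣ lowerSum q C B k a b := by
  simp only [lowerSum, Matrix.sum_apply]
  refine dvd_sum fun i hi => ?_
  have hik := mem_range.mp hi
  refine (pow_dvd_pow π (hm i hik)).trans ?_
  rw [pow_add, pow_mul]
  exact Matrix.dvd_mul_apply (hB i hik)
    (fun c e => pow_dvd_pow_of_dvd (hC _ (by omega) c e) _) a b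

lemma sum_eq_smul_iff_lowerSum_eq [DecidableEq n] {q : ℕ} (hq : q ≠ 0) {π : R}
    {C : ℕ → Matrix n n R} (hC0 : C 0 = π • 1) (B : ℕ → Matrix n n R) (k : ℕ) :
    (∑ j ∈ range (k + 1), B (k - j) * (C j).map (· ^ q ^ (k - j))) = π • B k ↔
      lowerSum q C B k = (π - π ^ q ^ k) • B k := by
  set g : ℕ → Matrix n n R := fun i => B i * (C (k - i)).map (· ^ q ^ i)
  have hsplit : ∑ j ∈ range (k + 1), B (k - j) * (C j).map (· ^ q ^ (k - j)) =
      lowerSum q C B k + π ^ q ^ k • B k :=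
    calc ∑ j ∈ range (k + 1), B (k - j) * (C j).map (· ^ q ^ (k - j))
        = ∑ j ∈ range (k + 1), g (k + 1 - 1 - j) := sum_congr rfl fun j hj => by
          simp only [g, Nat.add_sub_cancel, Nat.sub_sub_self (mem_range_succ_iff.mp hj)]
      _ = ∑ i ∈ range (k + 1), g i := sum_range_reflect g _
      _ = lowerSum q C B k + π ^ q ^ k • B k := by
          rw [sum_range_succ, lowerSum]
          simp only [g, Nat.sub_self, hC0, Matrix.smul_one_map_pow π (pow_ne_zero k hq),
            mul_smul_comm, mul_one]
  rw [hsplit, sub_smul, eq_sub_iff_add_eq]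

lemma lt_add_sub_mul_pow {q i k : ℕ} (hq : 3 ≤ q) (hi : i < k) :
    k < i + (q ^ (k - i) - 1) * q ^ i := by
  have hpow := add_two_le_pow hq (Nat.sub_ne_zero_of_lt hi)
  calc k < i + (q ^ (k - i) - 1) * 1 := by omega
    _ ≤ i + (q ^ (k - i) - 1) * q ^ i := by gcongr; exact Nat.one_le_pow _ _ (by omega)

variable {q : ℕ} {π : R} {C : ℕ → Matrix n n R} {c : ℕ → R}

-- Truncating to `i < k + 1` only serves to make the recursion visibly well founded.
noncomputable def lowerSumSolution [DecidableEq n] (q : ℕ) (C : ℕ → Matrix n n R) (c : ℕ → R) :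
    ℕ → Matrix n n R
  | 0 => 1
  | k + 1 => Classical.epsilon fun X =>
      lowerSum q C (fun i => if i < k + 1 then lowerSumSolution q C c i else 0) (k + 1) =
        c (k + 1) • X

lemma lowerSumSolution_zero [DecidableEq n] : lowerSumSolution q C c 0 = 1 := by
  rw [lowerSumSolution]

lemma lowerSum_lowerSumSolution [DecidableEq n] (hq : 3 ≤ q)
    (hC : ∀ j, 1 ≤ j → ∀ a b, π ^ (q ^ j - 1) ∣ C j a b) (hc0 : c 0 = 0)
    (hc : ∀ k ≠ 0, Associated π (c k)) (k : ℕ) :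
    lowerSum q C (lowerSumSolution q C c) k = c k • lowerSumSolution q C c k := by
  cases k with
  | zero => simp [lowerSum, hc0]
  | succ k =>
    set B := fun i => if i < k + 1 then lowerSumSolution q C c i else 0
    have hB : lowerSum q C (lowerSumSolution q C c) (k + 1) = lowerSum q C B (k + 1) :=
      lowerSum_congr q C fun i hi => (if_pos hi).symm
    have hdvd (a b : n) : c (k + 1) ∣ lowerSum q C B (k + 1) a b :=
      (hc _ k.succ_ne_zero).dvd_iff_dvd_left.mp <| pow_one π ▸
        pow_dvd_lowerSum_apply 0 hC (by simp) (fun i hi => by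
          have := lt_add_sub_mul_pow hq hi; omega) a b
    rw [hB, lowerSumSolution]
    exact Classical.epsilon_spec (Matrix.exists_eq_smul_of_dvd hdvd)

variable [IsDomain R]

lemma eq_of_lowerSum_eq_smul (hc : ∀ k ≠ 0, c k ≠ 0) {B B' : ℕ → Matrix n n R}
    (hB : ∀ k, lowerSum q C B k = c k • B k) (hB' : ∀ k, lowerSum q C B' k = c k • B' k)
    (h0 : B 0 = B' 0) : B = B' := by
  funext k
  induction k using Nat.strong_induction_on with
  | _ k ih =>
    cases k with
    | zero => exact h0
    | succ k =>
      apply smul_right_injective _ (hc _ k.succ_ne_zero)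
      simp only [← hB, ← hB', lowerSum_congr q C ih]

lemma pow_dvd_of_lowerSum_eq_smul (hq : 3 ≤ q) (hπ : π ≠ 0)
    (hC : ∀ j, 1 ≤ j → ∀ a b, π ^ (q ^ j - 1) ∣ C j a b)
    (hc : ∀ k ≠ 0, Associated π (c k)) {B : ℕ → Matrix n n R}
    (hB : ∀ k, lowerSum q C B k = c k • B k) (k : ℕ) (a b : n) : π ^ k ∣ B k a b := by
  induction k using Nat.strong_induction_on generalizing a b with
  | _ k ih =>
    cases k with
    | zero => simp
    | succ k =>
      have hsum := pow_dvd_lowerSum_apply id hC ih (fun i hi => lt_add_sub_mul_pow hq hi) a b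
      rw [hB, Matrix.smul_apply, smul_eq_mul,
        ((hc _ k.succ_ne_zero).symm.mul_right _).dvd_iff_dvd_right, pow_succ'] at hsum
      exact (mul_dvd_mul_iff_left hπ).mp hsum

end Recursion

theorem nu_one_exists_unique_general
    {R : Type*} [CommRing R] [IsDomain R] [IsDiscreteValuationRing R]
    (q : ℕ) (hq3 : 3 ≤ q)
    (π : R) (hπ : Irreducible π)
    (d : ℕ)
    (C : ℕ → Matrix (Fin d) (Fin d) R)
    (hC0 : C 0 = π • (1 : Matrix (Fin d) (Fin d) R))
    (hCval : ∀ i, 1 ≤ i → ∀ a b, C i a b ∈ (Ideal.span {π} : Ideal R) ^ (q ^ i - 1)) :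
    (∃! B : ℕ → Matrix (Fin d) (Fin d) R,
        B 0 = 1 ∧
        ∀ k : ℕ,
          (∑ j ∈ range (k + 1), B (k - j) * (C j).map (fun x => x ^ q ^ (k - j)))
            = π • B k) ∧
    (∀ B : ℕ → Matrix (Fin d) (Fin d) R,
        (B 0 = 1 ∧
          ∀ k : ℕ,
            (∑ j ∈ range (k + 1), B (k - j) * (C j).map (fun x => x ^ q ^ (k - j)))
              = π • B k) →
        (∀ i, ∀ a b, B i a b ∈ (Ideal.span {π} : Ideal R) ^ i) ∧ IsUnit (B 0)) := by
  set c : ℕ → R := fun k => π - π ^ q ^ k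
  have hc0 : c 0 = 0 := by simp [c]
  have hc (k : ℕ) (hk : k ≠ 0) : Associated π (c k) :=
    associated_sub_pow hπ.not_isUnit ((Nat.le_add_left 2 k).trans (add_two_le_pow hq3 hk))
  have hC : ∀ j, 1 ≤ j → ∀ a b, π ^ (q ^ j - 1) ∣ C j a b := by
    simpa only [Ideal.span_singleton_pow, Ideal.mem_span_singleton] using hCval
  have hiff := sum_eq_smul_iff_lowerSum_eq (show q ≠ 0 by omega) hC0
  set B₀ := lowerSumSolution q C c
  have hB₀ : ∀ k, lowerSum q C B₀ k = c k • B₀ k := lowerSum_lowerSumSolution hq3 hC hc0 hc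
  have hB₀0 : B₀ 0 = 1 := lowerSumSolution_zero
  refine ⟨⟨B₀, ⟨hB₀0, fun k => (hiff B₀ k).mpr (hB₀ k)⟩, fun B hB => ?_⟩,
    fun B hB => ⟨?_, hB.1 ▸ isUnit_one⟩⟩
  · exact eq_of_lowerSum_eq_smul (fun k hk => (hc k hk).ne_zero_iff.mp hπ.ne_zero)
      (fun k => (hiff B k).mp (hB.2 k)) hB₀ (hB.1.trans hB₀0.symm)
  · intro i a b
    rw [Ideal.span_singleton_pow, Ideal.mem_span_singleton]
    exact pow_dvd_of_lowerSum_eq_smul hq3 hπ.ne_zero hC hc (fun k => (hiff B k).mp (hB.2 k)) i a b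

/-- Let `R` be a `π`-torsion free, `π`-adically complete
discrete valuation ring with `q ≥ 3`, and suppose
`φ_{N¹}(z) = ∑_{i=0}^{sf} π^{q^i - 1} P_i^φ τ^i` with `P₀ = π·I` (so the
`0`-th coefficient is `π·I` and the `i`-th coefficient has all entries
divisible by `π^{q^i - 1}`, vanishing for `i > sf`).  Then there is a
*unique* twisted power series `ν₁ = ∑ B_i τ^i` with `B₀ = I` satisfying
`ν₁ ∘ φ_{N¹}(z) = π·I ∘ ν₁`; moreover its coefficients satisfy
`v(B_i) ≥ i` for all `i` (and `B₀ = I` is invertible), hence `ν₁` lies in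
the group `S*` and is an isomorphism `N¹ ≅ Ĝ_a^d` of `A`-module schemes. -/
theorem nu_one_exists_unique
    {R : Type*} [CommRing R] [IsDomain R] [IsDiscreteValuationRing R]
    (p : ℕ) [Fact p.Prime] [CharP R p]
    (hexp : ℕ) (hh : 0 < hexp) (q : ℕ) (hq : q = p ^ hexp) (hq3 : 3 ≤ q)
    (π : R) (hπ : Irreducible π)
    (hcomplete : IsAdicComplete (Ideal.span {π}) R)
    (d sf : ℕ) (hd : 1 ≤ d)
    (C : ℕ → Matrix (Fin d) (Fin d) R)
    (hC0 : C 0 = π • (1 : Matrix (Fin d) (Fin d) R))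
    (hCval : ∀ i, 1 ≤ i → ∀ a b, C i a b ∈ (Ideal.span {π} : Ideal R) ^ (q ^ i - 1))
    (hCtop : ∀ i > sf, C i = 0) :
    (∃! B : ℕ → Matrix (Fin d) (Fin d) R,
        B 0 = 1 ∧
        ∀ k : ℕ,
          (∑ j ∈ range (k + 1), B (k - j) * (C j).map (fun x => x ^ q ^ (k - j)))
            = π • B k) ∧
    (∀ B : ℕ → Matrix (Fin d) (Fin d) R,
        (B 0 = 1 ∧
          ∀ k : ℕ,
            (∑ j ∈ range (k + 1), B (k - j) * (C j).map (fun x => x ^ q ^ (k - j)))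
              = π • B k) →
        (∀ i, ∀ a b, B i a b ∈ (Ideal.span {π} : Ideal R) ^ i) ∧ IsUnit (B 0)) :=
  nu_one_exists_unique_general q hq3 π hπ d C hC0 hCval
end

section
/- Let E be an elliptic abelian Anderson A-module of dimension d and rank r over R = l[[z]]. Then H*_dR(E) := D(φ_E)/D_si(φ_E) has R-rank r, and D(φ_E)/D_i(φ_E) has R-rank r − d. -/
/-!
Put `f = π - t`. Multiplication by `f` and the inclusions give two short exact sequences of
`R[t]`-modules, `0 → N/fM → M/fM → M/N → 0` and `0 → M/N → N/fN → N/fM → 0`; injectivity of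
`M/N → N/fN` holds because `f` is a non-zero-divisor on the free module `M`. Since
`R[t]/(f) ≅ R`, the module `M/fM` is `R`-free of rank `r`. The first sequence splits over `R`
because `M/N` is free, so over the principal ideal domain `R` its kernel `N/fM` is free of rank
`r - d`; then the second one splits too, and `N/fN` is free of rank `d + (r - d) = r`.
-/

open Module Function

namespace RestrictScalars

variable (R : Type*) {S X Y Z : Type*} [CommSemiring R] [Semiring S] [Algebra R S]
  [AddCommMonoid X] [Module S X] [AddCommMonoid Y] [Module S Y] [AddCommMonoid Z] [Module S Z]

def map (φ : X →ₗ[S] Y) : RestrictScalars R S X →ₗ[R] RestrictScalars R S Y where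
  toFun := φ
  map_add' := φ.map_add
  map_smul' c := φ.map_smul (algebraMap R S c)

theorem exact_map {φ : X →ₗ[S] Y} {ψ : Y →ₗ[S] Z} (h : Exact φ ψ) :
    Exact (map R φ) (map R ψ) :=
  h

variable (S) in
def linearEquiv [Module R Y] [IsScalarTower R S Y] : RestrictScalars R S Y ≃ₗ[R] Y where
  toAddEquiv := addEquiv R S Y
  map_smul' c y := by simp [addEquiv_map_smul, algebraMap_smul]

end RestrictScalars

section ShortExact

-- Stated for `AddCommMonoid`s: on `RestrictScalars R S (M ⧸ P)` the `Module R` instance is not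
-- found over the additive monoid underlying its `AddCommGroup` instance.
variable {R M N P : Type*} [CommRing R] [AddCommMonoid M] [AddCommMonoid N] [AddCommMonoid P]
  [Module R M] [Module R N] [Module R P] {f : M →ₗ[R] N} {g : N →ₗ[R] P}

theorem Function.Exact.nonempty_linearEquiv_prod [Projective R P] (h : Exact f g)
    (hf : Injective f) (hg : Surjective g) : Nonempty (N ≃ₗ[R] M × P) := by
  let := Module.addCommMonoidToAddCommGroup R (M := M)
  let := Module.addCommMonoidToAddCommGroup R (M := N)
  let := Module.addCommMonoidToAddCommGroup R (M := P)
  obtain ⟨l, hl⟩ := projective_lifting_property g LinearMap.id hg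
  exact ⟨(h.splitSurjectiveEquiv hf ⟨l, hl⟩).1⟩

theorem Function.Exact.finite_free_finrank_left [IsDomain R] [IsPrincipalIdealRing R]
    [Module.Finite R N] [Free R N] [Free R P] (h : Exact f g) (hf : Injective f)
    (hg : Surjective g) :
    Module.Finite R M ∧ Free R M ∧ finrank R M + finrank R P = finrank R N := by
  obtain ⟨e⟩ := h.nonempty_linearEquiv_prod hf hg
  have : Module.Finite R M := .of_surjective (LinearMap.fst R M P ∘ₗ e.toLinearMap)
    fun m ↦ ⟨e.symm (m, 0), by simp⟩
  have : Module.Finite R P := .of_surjective g hg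
  have : IsTorsionFree R M := hf.moduleIsTorsionFree f (map_smul f)
  let := Module.addCommMonoidToAddCommGroup R (M := M)
  exact ⟨inferInstance, inferInstance, by rw [e.finrank_eq, finrank_prod]⟩

theorem Function.Exact.finite_free_finrank_middle [Nontrivial R]
    [Module.Finite R M] [Free R M] [Module.Finite R P] [Free R P] (h : Exact f g)
    (hf : Injective f) (hg : Surjective g) :
    Module.Finite R N ∧ Free R N ∧ finrank R N = finrank R M + finrank R P := by
  obtain ⟨e⟩ := h.nonempty_linearEquiv_prod hf hg
  exact ⟨.equiv e.symm, .of_equiv e.symm, by rw [e.finrank_eq, finrank_prod]⟩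

end ShortExact

section QuotientSMulTop

variable {ι R S M : Type*} [CommRing R] [CommRing S] [Algebra R S] [AddCommGroup M] [Module S M]

theorem Module.Basis.mem_ideal_smul_top_iff (b : Basis ι S M) {I : Ideal S} {x : M} :
    x ∈ I • (⊤ : Submodule S M) ↔ ∀ i, b.repr x i ∈ I := by
  constructor
  · refine fun hx ↦ Submodule.smul_induction_on hx ?_ ?_
    · intro s hs m _ i
      simpa using I.mul_mem_right _ hs
    · intro x y hx hy i
      simpa using I.add_mem (hx i) (hy i)
  · intro hx
    rw [← b.linearCombination_repr x, Finsupp.linearCombination_apply]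
    exact Submodule.sum_mem _ fun i _ ↦ Submodule.smul_mem_smul (hx i) trivial

noncomputable def Module.Basis.quotientIdealSMulTopEquiv (b : Basis ι S M) (I : Ideal S) :
    (M ⧸ I • (⊤ : Submodule S M)) ≃ₗ[S] (ι →₀ S ⧸ I) :=
  let φ : M →ₗ[S] ι →₀ S ⧸ I := Finsupp.mapRange.linearMap I.mkQ ∘ₗ b.repr.toLinearMap
  have hker : I • ⊤ = LinearMap.ker φ := by
    ext x
    simp [φ, b.mem_ideal_smul_top_iff, Finsupp.ext_iff, Ideal.Quotient.eq_zero_iff_mem]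
  have hφ : Surjective φ :=
    (Finsupp.mapRange_surjective _ (map_zero _) I.mkQ_surjective).comp b.repr.surjective
  Submodule.quotEquivOfEq _ _ hker ≪≫ₗ φ.quotKerEquivOfSurjective hφ

noncomputable def Module.Basis.restrictScalarsQuotient (b : Basis ι S M) {I : Ideal S}
    (hI : Bijective (algebraMap R (S ⧸ I))) :
    Basis ι R (RestrictScalars R S (M ⧸ I • (⊤ : Submodule S M))) :=
  let e := b.quotientIdealSMulTopEquiv I
  .ofRepr <| LinearEquiv.ofBijective (RestrictScalars.map R e.toLinearMap) e.bijective ≪≫ₗ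
    RestrictScalars.linearEquiv R S ≪≫ₗ
    Finsupp.mapRange.linearEquiv (LinearEquiv.ofBijective (Algebra.linearMap R (S ⧸ I)) hI).symm

end QuotientSMulTop

namespace Submodule

variable {S M : Type*} [CommRing S] [AddCommGroup M] [Module S M] {N P : Submodule S M}

theorem injective_mapQ_subtype : Injective ((P.comap N.subtype).mapQ P N.subtype le_rfl) :=
  LinearMap.ker_eq_bot.mp <| ker_liftQ_eq_bot' _ _ <| by rw [LinearMap.ker_comp, ker_mkQ]

theorem exact_mapQ_subtype_factor (h : P ≤ N) :
    Exact ((P.comap N.subtype).mapQ P N.subtype le_rfl) (factor h) := by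
  intro y
  obtain ⟨m, rfl⟩ := mkQ_surjective P y
  rw [factor_mk, mkQ_apply, Quotient.mk_eq_zero]
  constructor
  · intro hm
    exact ⟨Quotient.mk ⟨m, hm⟩, rfl⟩
  · rintro ⟨y, hy⟩
    obtain ⟨n, rfl⟩ := mkQ_surjective _ y
    simp only [mkQ_apply, mapQ_apply, Quotient.eq] at hy
    simpa using N.sub_mem n.2 (h hy)

variable {f : S}

theorem mem_ideal_span_singleton_smul_iff {x : M} :
    x ∈ Ideal.span {f} • P ↔ ∃ p ∈ P, f • p = x := by
  rw [ideal_span_singleton_smul, mem_smul_pointwise_iff_exists]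

theorem ideal_span_singleton_smul_top_le (hfN : ∀ m : M, f • m ∈ N) :
    Ideal.span {f} • ⊤ ≤ N := fun _ hx ↦ by
  obtain ⟨m, -, rfl⟩ := mem_ideal_span_singleton_smul_iff.mp hx
  exact hfN m

theorem comap_subtype_smul_le_comap_subtype_smul_top (I : Ideal S) :
    comap N.subtype (I • N) ≤ comap N.subtype (I • ⊤) :=
  comap_mono (smul_mono_right I le_top)

variable (N) in
def quotientSMulMap (f : S) (hfN : ∀ m : M, f • m ∈ N) :
    M ⧸ N →ₗ[S] N ⧸ comap N.subtype (Ideal.span {f} • N) :=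
  N.liftQ ((comap N.subtype (Ideal.span {f} • N)).mkQ ∘ₗ
      LinearMap.codRestrict N (f • LinearMap.id) hfN) fun n hn ↦ by
    simpa using smul_mem_smul (Ideal.mem_span_singleton_self f) hn

variable (hfN : ∀ m : M, f • m ∈ N)

@[simp]
theorem quotientSMulMap_mk (m : M) :
    N.quotientSMulMap f hfN (Quotient.mk m) = Quotient.mk ⟨f • m, hfN m⟩ :=
  rfl

theorem injective_quotientSMulMap (hf : IsSMulRegular M f) :
    Injective (N.quotientSMulMap f hfN) := by
  refine LinearMap.ker_eq_bot.mp (ker_liftQ_eq_bot' _ _ ?_)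
  ext m
  simp only [LinearMap.mem_ker, LinearMap.coe_comp, comp_apply, mkQ_apply,
    Quotient.mk_eq_zero, mem_comap, subtype_apply, LinearMap.codRestrict_apply,
    LinearMap.smul_apply, LinearMap.id_coe, id_eq, mem_ideal_span_singleton_smul_iff]
  exact ⟨fun hm ↦ ⟨m, hm, rfl⟩, fun ⟨n, hn, h⟩ ↦ hf h ▸ hn⟩

theorem exact_quotientSMulMap_factor :
    Exact (N.quotientSMulMap f hfN)
      (factor (comap_subtype_smul_le_comap_subtype_smul_top (Ideal.span {f}))) := by
  intro y
  obtain ⟨n, rfl⟩ := mkQ_surjective _ y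
  rw [factor_mk, mkQ_apply, Quotient.mk_eq_zero, mem_comap, subtype_apply,
    mem_ideal_span_singleton_smul_iff]
  constructor
  · rintro ⟨m, -, hm⟩
    exact ⟨Quotient.mk m, by simp [hm]⟩
  · rintro ⟨y, hy⟩
    obtain ⟨m, rfl⟩ := mkQ_surjective _ y
    simp only [mkQ_apply, quotientSMulMap_mk, Quotient.eq, mem_comap, subtype_apply,
      mem_ideal_span_singleton_smul_iff] at hy
    obtain ⟨p, -, hp⟩ := hy
    exact ⟨m - p, trivial, by simp [smul_sub, hp]⟩

end Submodule

namespace Submodule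

variable (R : Type*) {S M : Type*} [CommRing R] [IsDomain R] [CommRing S] [Algebra R S]
  [AddCommGroup M] [Module S M] {N P : Submodule S M}

theorem finite_free_finrank_quotient_comap_subtype [IsPrincipalIdealRing R]
    (h : P ≤ N) [Module.Finite R (RestrictScalars R S (M ⧸ P))]
    [Free R (RestrictScalars R S (M ⧸ P))] [Free R (RestrictScalars R S (M ⧸ N))] :
    Module.Finite R (RestrictScalars R S (N ⧸ P.comap N.subtype)) ∧
      Free R (RestrictScalars R S (N ⧸ P.comap N.subtype)) ∧
      finrank R (RestrictScalars R S (N ⧸ P.comap N.subtype)) +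
        finrank R (RestrictScalars R S (M ⧸ N)) = finrank R (RestrictScalars R S (M ⧸ P)) :=
  (RestrictScalars.exact_map R (exact_mapQ_subtype_factor h)).finite_free_finrank_left
    injective_mapQ_subtype (factor_surjective h)

theorem finite_free_finrank_quotient_comap_ideal_span_smul {f : S}
    (hf : IsSMulRegular M f) (hfN : ∀ m : M, f • m ∈ N)
    [Module.Finite R (RestrictScalars R S (M ⧸ N))] [Free R (RestrictScalars R S (M ⧸ N))]
    [Module.Finite R (RestrictScalars R S (N ⧸ comap N.subtype (Ideal.span {f} • ⊤)))]
    [Free R (RestrictScalars R S (N ⧸ comap N.subtype (Ideal.span {f} • ⊤)))] :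
    Module.Finite R (RestrictScalars R S (N ⧸ comap N.subtype (Ideal.span {f} • N))) ∧
      Free R (RestrictScalars R S (N ⧸ comap N.subtype (Ideal.span {f} • N))) ∧
      finrank R (RestrictScalars R S (N ⧸ comap N.subtype (Ideal.span {f} • N))) =
        finrank R (RestrictScalars R S (M ⧸ N)) +
          finrank R (RestrictScalars R S (N ⧸ comap N.subtype (Ideal.span {f} • ⊤))) :=
  (RestrictScalars.exact_map R (exact_quotientSMulMap_factor hfN)).finite_free_finrank_middle
    (injective_quotientSMulMap hfN hf)
    (factor_surjective (comap_subtype_smul_le_comap_subtype_smul_top (Ideal.span {f})))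

end Submodule

open Polynomial in
theorem Polynomial.bijective_algebraMap_quotient_span_C_sub_X {R : Type*} [CommRing R] (a : R) :
    Bijective (algebraMap R (R[X] ⧸ Ideal.span {C a - X})) := by
  rw [← neg_sub, Ideal.span_singleton_neg]
  let e := (quotientSpanXSubCAlgEquiv a).symm
  have : ⇑(algebraMap R (R[X] ⧸ Ideal.span {X - C a})) = e :=
    _root_.funext fun c ↦ (e.commutes c).symm
  exact this ▸ e.bijective

theorem deRham_rank_general
    {R : Type*} [CommRing R] [IsDomain R] [IsDiscreteValuationRing R]
    (π : R)
    (r d : ℕ)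
    (M : Type*) [AddCommGroup M] [Module (Polynomial R) M]
    [Module.Free (Polynomial R) M] [Module.Finite (Polynomial R) M]
    (hrkM : Module.finrank (Polynomial R) M = r)
    (N : Submodule (Polynomial R) M)
    -- `(π − t)·M ⊆ N`  (inner biderivations are biderivations)
    (hcN : ∀ m : M, (Polynomial.C π - Polynomial.X) • m ∈ N)
    -- `M/N ≅ Lie(E)*` is free of rank `d` over `R`
    [Module.Finite R (RestrictScalars R (Polynomial R) (M ⧸ N))]
    [Module.Free R (RestrictScalars R (Polynomial R) (M ⧸ N))]
    (hLie : Module.finrank R (RestrictScalars R (Polynomial R) (M ⧸ N)) = d) :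
    -- `N/(π−t)N` is free of rank `r` over `R`, and
    -- `N/(π−t)M` is free of rank `r − d` over `R`.
    (Module.Finite R (RestrictScalars R (Polynomial R)
        (N ⧸ (Submodule.comap N.subtype
          ((Ideal.span {Polynomial.C π - Polynomial.X} : Ideal (Polynomial R)) • N)))) ∧
     Module.Free R (RestrictScalars R (Polynomial R)
        (N ⧸ (Submodule.comap N.subtype
          ((Ideal.span {Polynomial.C π - Polynomial.X} : Ideal (Polynomial R)) • N)))) ∧
     Module.finrank R (RestrictScalars R (Polynomial R)
        (N ⧸ (Submodule.comap N.subtype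
          ((Ideal.span {Polynomial.C π - Polynomial.X} : Ideal (Polynomial R)) • N)))) = r) ∧
    (Module.Finite R (RestrictScalars R (Polynomial R)
        (N ⧸ (Submodule.comap N.subtype
          ((Ideal.span {Polynomial.C π - Polynomial.X} : Ideal (Polynomial R)) •
            (⊤ : Submodule (Polynomial R) M))))) ∧
     Module.Free R (RestrictScalars R (Polynomial R)
        (N ⧸ (Submodule.comap N.subtype
          ((Ideal.span {Polynomial.C π - Polynomial.X} : Ideal (Polynomial R)) •
            (⊤ : Submodule (Polynomial R) M))))) ∧
     Module.finrank R (RestrictScalars R (Polynomial R)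
        (N ⧸ (Submodule.comap N.subtype
          ((Ideal.span {Polynomial.C π - Polynomial.X} : Ideal (Polynomial R)) •
            (⊤ : Submodule (Polynomial R) M))))) = r - d) := by
  have hreg : IsSMulRegular M (Polynomial.C π - Polynomial.X) := by
    refine (IsRegular.of_ne_zero ?_).isSMulRegular
    rw [← neg_sub]
    exact neg_ne_zero.mpr (Polynomial.X_sub_C_ne_zero π)
  let bQ := (Module.Free.chooseBasis (Polynomial R) M).restrictScalarsQuotient
    (Polynomial.bijective_algebraMap_quotient_span_C_sub_X π)
  have := Module.Free.of_basis bQ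
  have := Module.Finite.of_basis bQ
  have hrkQ : Module.finrank R (RestrictScalars R (Polynomial R)
      (M ⧸ (Ideal.span {Polynomial.C π - Polynomial.X} • ⊤ : Submodule (Polynomial R) M))) = r := by
    rw [Module.finrank_eq_card_basis bQ, ← Module.finrank_eq_card_chooseBasisIndex, hrkM]
  obtain ⟨hKfin, hKfree, hrkK⟩ := Submodule.finite_free_finrank_quotient_comap_subtype R
    (Submodule.ideal_span_singleton_smul_top_le hcN)
  obtain ⟨hHfin, hHfree, hrkH⟩ :=
    Submodule.finite_free_finrank_quotient_comap_ideal_span_smul R hreg hcN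
  exact ⟨⟨hHfin, hHfree, by omega⟩, hKfin, hKfree, by omega⟩

/-- Let `E` be an elliptic abelian Anderson `A`-module of
dimension `d` and rank `r` over `R = l[[z]]`.  Identifying the `A`-motive
`M = M(E)` with a free `A ⊗ R ≅ R[t]`-module of rank `r`, the biderivation
modules are `D(φ_E) = Mτ =: N`, `D_i(φ_E) = (π − t)M` and
`D_si(φ_E) = (π − t)Mτ = (π − t)N`, and `M/N ≅ Lie(E)* ` is free of rank `d`
over `R`.  Then `H*_dR(E) = D(φ_E)/D_si(φ_E) = N/(π − t)N` has `R`-rank `r`,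
and `D(φ_E)/D_i(φ_E) = N/(π − t)M` has `R`-rank `r − d`. -/
theorem deRham_rank
    {R : Type*} [CommRing R] [IsDomain R] [IsDiscreteValuationRing R]
    (π : R) (hπ : Irreducible π)
    (r d : ℕ) (hdr : d ≤ r)
    (M : Type*) [AddCommGroup M] [Module (Polynomial R) M]
    [Module.Free (Polynomial R) M] [Module.Finite (Polynomial R) M]
    (hrkM : Module.finrank (Polynomial R) M = r)
    (N : Submodule (Polynomial R) M)
    -- `(π − t)·M ⊆ N`  (inner biderivations are biderivations)
    (hcN : ∀ m : M, (Polynomial.C π - Polynomial.X) • m ∈ N)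
    -- `M/N ≅ Lie(E)*` is free of rank `d` over `R`
    [Module.Finite R (RestrictScalars R (Polynomial R) (M ⧸ N))]
    [Module.Free R (RestrictScalars R (Polynomial R) (M ⧸ N))]
    (hLie : Module.finrank R (RestrictScalars R (Polynomial R) (M ⧸ N)) = d) :
    -- `N/(π−t)N` is free of rank `r` over `R`, and
    -- `N/(π−t)M` is free of rank `r − d` over `R`.
    (Module.Finite R (RestrictScalars R (Polynomial R)
        (N ⧸ (Submodule.comap N.subtype
          ((Ideal.span {Polynomial.C π - Polynomial.X} : Ideal (Polynomial R)) • N)))) ∧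
     Module.Free R (RestrictScalars R (Polynomial R)
        (N ⧸ (Submodule.comap N.subtype
          ((Ideal.span {Polynomial.C π - Polynomial.X} : Ideal (Polynomial R)) • N)))) ∧
     Module.finrank R (RestrictScalars R (Polynomial R)
        (N ⧸ (Submodule.comap N.subtype
          ((Ideal.span {Polynomial.C π - Polynomial.X} : Ideal (Polynomial R)) • N)))) = r) ∧
    (Module.Finite R (RestrictScalars R (Polynomial R)
        (N ⧸ (Submodule.comap N.subtype
          ((Ideal.span {Polynomial.C π - Polynomial.X} : Ideal (Polynomial R)) •
            (⊤ : Submodule (Polynomial R) M))))) ∧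
     Module.Free R (RestrictScalars R (Polynomial R)
        (N ⧸ (Submodule.comap N.subtype
          ((Ideal.span {Polynomial.C π - Polynomial.X} : Ideal (Polynomial R)) •
            (⊤ : Submodule (Polynomial R) M))))) ∧
     Module.finrank R (RestrictScalars R (Polynomial R)
        (N ⧸ (Submodule.comap N.subtype
          ((Ideal.span {Polynomial.C π - Polynomial.X} : Ideal (Polynomial R)) •
            (⊤ : Submodule (Polynomial R) M))))) = r - d) :=
  deRham_rank_general π r d M hrkM N hcN hLie
end

section
/- Let E be a Drinfeld module of rank r over R with splitting number m and nonzero invariant γ, and let f* act on the l((z))-vector space H̃ with basis {i*Θ, Ψ_1, ..., Ψ_{m-1}} by f*(i*Θ) = γΨ_1, f*(Ψ_i) = Ψ_{i+1} for 1 ≤ i ≤ m−2, and f*(Ψ_{m-1}) = i*Θ + λ_{m-1}Ψ_{m-1} + ... + λ_1Ψ_1, where γ, λ_i ∈ R = l[[z]]. If v ∈ H̃ ⊗ L_∞ is a nonzero eigenvector with f*(v) = μv, then ord_z(μ) ≥ 0. -/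
/-- The `φ`-semilinear operator `f*` on `H̃ ⊗ L_∞` in the basis
`{i*Θ, Ψ₁, …, Ψ_{m−1}}` (of size `m = n + 2`), given by `f*(i*Θ) = γΨ₁`,
`f*(Ψ_i) = Ψ_{i+1}` for `1 ≤ i ≤ m − 2`, and
`f*(Ψ_{m−1}) = i*Θ + λ_{m−1}Ψ_{m−1} + ⋯ + λ₁Ψ₁`.  In coordinates:
`(f*β)₀ = φ(β_{m−1})`, `(f*β)₁ = γ·φ(β₀) + λ₁·φ(β_{m−1})`, and
`(f*β)_i = φ(β_{i−1}) + λ_i·φ(β_{m−1})` for `2 ≤ i ≤ m − 1`.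
(Note `(0 − 1 : Fin (n+2))` is the last index `m − 1`.) -/
noncomputable def drinfeldFstar {L : Type*} [Field L] (φ : L →+* L) (n : ℕ)
    (γ : L) (lam : ℕ → L) (β : Fin (n + 2) → L) : Fin (n + 2) → L :=
  fun j =>
    if (j : ℕ) = 0 then φ (β (0 - 1))
    else (if (j : ℕ) = 1 then γ * φ (β 0) else φ (β (j - 1)))
          + lam (j : ℕ) * φ (β (0 - 1))

/-- Let `E` be a Drinfeld module of rank `r` over
`R = l[[z]]` with splitting number `m = n + 2` and invariants
`γ, λ₁, …, λ_{m−1} ∈ R` (so of nonnegative `z`-order), and let `f*` act on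
`H̃ ⊗ L_∞` as above, `φ`-semilinearly (`φ` an automorphism of `L_∞`
preserving `ord_z`).  If `v` is a nonzero eigenvector with `f*(v) = μ·v`,
then `ord_z(μ) ≥ 0`. -/
theorem eigenvalue_ord_nonneg
    {L : Type*} [Field L] (φ : L →+* L) (hφsurj : Function.Surjective φ)
    (ord : L → ℚ)
    (hmul : ∀ x y : L, x ≠ 0 → y ≠ 0 → ord (x * y) = ord x + ord y)
    (hadd : ∀ x y : L, x ≠ 0 → y ≠ 0 → x + y ≠ 0 →
      min (ord x) (ord y) ≤ ord (x + y))
    (hφord : ∀ x : L, x ≠ 0 → ord (φ x) = ord x)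
    (n : ℕ) (γ : L) (lam : ℕ → L)
    (hγ : γ = 0 ∨ 0 ≤ ord γ)
    (hlam : ∀ i, lam i = 0 ∨ 0 ≤ ord (lam i))
    (v : Fin (n + 2) → L) (hv : v ≠ 0) (μ : L)
    (heig : drinfeldFstar φ n γ lam v = μ • v) :
    μ = 0 ∨ 0 ≤ ord μ := by
  by_cases hμ : μ = 0
  · exact Or.inl hμ
  right
  by_contra hord
  push_neg at hord
  have heq : ∀ j : Fin (n+2), drinfeldFstar φ n γ lam v j = μ * v j := by
    intro j; rw [heig]; rfl
  have hn1 : n + 1 < n + 2 := by omega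
  have hlastv : (0 - 1 : Fin (n+2)) = ⟨n+1, hn1⟩ := by
    apply Fin.ext
    rw [Fin.sub_def]
    simp
  have h0 : φ (v (0-1)) = μ * v 0 := by
    have := heq 0
    simpa [drinfeldFstar] using this
  have hsub : ∀ (k : ℕ) (h : k + 1 < n + 2),
      ((⟨k+1, h⟩ : Fin (n+2)) - 1) = (⟨k, by omega⟩ : Fin (n+2)) := by
    intro k h
    apply Fin.ext
    rw [Fin.sub_def]
    simp only [Fin.val_one]
    show (n + 2 - 1 + (k + 1)) % (n + 2) = k
    rw [show n + 2 - 1 + (k + 1) = k + (n + 2) by omega, Nat.add_mod_right]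
    exact Nat.mod_eq_of_lt (by omega)
  have hstep : ∀ (k : ℕ) (h : k + 1 < n + 2),
      (if k + 1 = 1 then γ * φ (v 0) else φ (v ⟨k, by omega⟩))
        + lam (k+1) * φ (v (0-1)) = μ * v ⟨k+1, h⟩ := by
    intro k h
    have := heq ⟨k+1, h⟩
    rw [drinfeldFstar] at this
    simpa [hsub k h] using this
  -- v at the last index is nonzero
  have hvlast : v (0-1) ≠ 0 := by
    intro hz
    apply hv
    have key : ∀ k (h : k < n+2), v ⟨k, h⟩ = 0 := by
      intro k
      induction k with
      | zero =>
        intro h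
        have e := h0
        rw [hz, map_zero] at e
        have : (⟨0, h⟩ : Fin (n+2)) = 0 := rfl
        rw [this]
        rcases mul_eq_zero.mp e.symm with h' | h'
        · exact absurd h' hμ
        · exact h'
      | succ k ih =>
        intro h
        have hk : k < n + 2 := by omega
        have e := hstep k h
        have hT1 : (if k + 1 = 1 then γ * φ (v 0) else φ (v ⟨k, hk⟩)) = 0 := by
          by_cases h1 : k + 1 = 1
          · rw [if_pos h1]
            have hk0 : k = 0 := by omega
            have : v 0 = 0 := by
              have := ih hk
              simpa [hk0] using this
            rw [this, map_zero, mul_zero]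
          · rw [if_neg h1, ih hk, map_zero]
        rw [hT1, hz, map_zero, mul_zero, add_zero] at e
        rcases mul_eq_zero.mp e.symm with h' | h'
        · exact absurd h' hμ
        · exact h'
    funext j
    obtain ⟨k, hk⟩ := j
    exact key k hk
  have h0ne : v 0 ≠ 0 := by
    intro hz
    rw [hz, mul_zero] at h0
    exact hvlast (φ.injective (by rw [map_zero]; exact h0))
  have hord0 : ord (v 0) = ord (v (0-1)) - ord μ := by
    have : ord (φ (v (0-1))) = ord μ + ord (v 0) := by
      rw [h0]; exact hmul _ _ hμ h0ne
    rw [hφord _ hvlast] at this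
    linarith
  have main : ∀ k (h : k < n+2), v ⟨k, h⟩ ≠ 0 →
      ord (v (0-1)) - ord μ ≤ ord (v ⟨k, h⟩) := by
    intro k
    induction k with
    | zero =>
      intro h _
      have h00 : (⟨0, h⟩ : Fin (n+2)) = 0 := rfl
      rw [h00, hord0]
    | succ k ih =>
      intro h hne
      have hk : k < n + 2 := by omega
      have e := hstep k h
      set T1 := (if k + 1 = 1 then γ * φ (v 0) else φ (v ⟨k, hk⟩)) with hT1
      set T2 := lam (k+1) * φ (v (0-1)) with hT2
      have hsumne : T1 + T2 ≠ 0 := by rw [e]; exact mul_ne_zero hμ hne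
      have hb1 : T1 ≠ 0 → ord (v (0-1)) ≤ ord T1 := by
        intro hT
        rw [hT1]
        by_cases h1 : k + 1 = 1
        · rw [if_pos h1]
          rw [hT1, if_pos h1] at hT
          have hγne : γ ≠ 0 := fun hg => hT (by rw [hg, zero_mul])
          have hφne : φ (v 0) ≠ 0 := fun hg => hT (by rw [hg, mul_zero])
          rw [hmul _ _ hγne hφne, hφord _ h0ne, hord0]
          rcases hγ with hg | hg
          · exact absurd hg hγne
          · linarith
        · rw [if_neg h1]
          rw [hT1, if_neg h1] at hT
          have hvk : v ⟨k, hk⟩ ≠ 0 := fun hg =>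
            hT (by rw [hg, map_zero])
          rw [hφord _ hvk]
          have := ih hk hvk
          linarith
      have hb2 : T2 ≠ 0 → ord (v (0-1)) ≤ ord T2 := by
        intro hT
        rw [hT2] at hT ⊢
        have hlne : lam (k+1) ≠ 0 := fun hg => hT (by rw [hg, zero_mul])
        have hφne : φ (v (0-1)) ≠ 0 := fun hg => hT (by rw [hg, mul_zero])
        rw [hmul _ _ hlne hφne, hφord _ hvlast]
        rcases hlam (k+1) with hg | hg
        · exact absurd hg hlne
        · linarith
      have hbound : ord (v (0-1)) ≤ ord (T1 + T2) := by
        by_cases hT1z : T1 = 0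
        · rw [hT1z, zero_add]
          rw [hT1z, zero_add] at hsumne
          exact hb2 hsumne
        · by_cases hT2z : T2 = 0
          · rw [hT2z, add_zero]
            rw [hT2z, add_zero] at hsumne
            exact hb1 hT1z
          · have := hadd T1 T2 hT1z hT2z hsumne
            have b1 := hb1 hT1z
            have b2 := hb2 hT2z
            have : min (ord T1) (ord T2) ≤ ord (T1 + T2) := this
            rcases min_le_iff.mp (le_refl (min (ord T1) (ord T2))) with _ | _ <;>
              (exact le_trans (le_min b1 b2) this)
      rw [e, hmul _ _ hμ hne] at hbound
      linarith
  have hfin : v ⟨n+1, hn1⟩ ≠ 0 := by rw [← hlastv]; exact hvlast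
  have := main (n+1) hn1 hfin
  rw [← hlastv] at this
  linarith
end
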